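/- arXiv:2401.04458 — 5 statements merged into one kernel-verified Lean document; each statement's English description precedes it below -/
import Mathlib

section
/- Let A be a commutative ring, let n and r be natural numbers, let M be an A-module, and let a_1, …, a_r be elements of A generating the unit ideal. Suppose that for each i ∈ {1, …, r}, the localization of M away from a_i (i.e. at the multiplicative set of powers of a_i) is isomorphic, as a module over the localization of A away from a_i, to the free module of rank n. Then M can be generated by n·r elements, i.e. there is a subset of M of cardinality at most n·r whose A-linear span is all of M. -/
/-!
Over `A[1/aᵢ]` the localization of `M` is spanned by the images of the `n` standard basis
vectors. Clearing their denominators gives `n` elements of `M` whose span contains some power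
of `aᵢ` times every element of `M`. Since the `aᵢ` generate the unit ideal, so do any powers of
them, and the union of these `n * r` elements spans `M`.
-/

open Submodule

theorem LinearEquiv.exists_finset_card_le_span_eq_top {R M : Type*} [Semiring R]
    [AddCommMonoid M] [Module R M] {n : ℕ} (e : M ≃ₗ[R] (Fin n → R)) :
    ∃ s : Finset M, s.card ≤ n ∧ span R (s : Set M) = ⊤ := by
  classical
  let b := (Pi.basisFun R (Fin n)).map e.symm
  refine ⟨Finset.univ.image b, Finset.card_image_le.trans_eq (Finset.card_fin n), ?_⟩
  rw [Finset.coe_image, Finset.coe_univ, Set.image_univ, b.span_eq]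

theorem IsLocalizedModule.exists_finset_card_le_forall_smul_mem_span {R : Type*}
    [CommSemiring R] (S : Submonoid R) (Rₛ : Type*) [CommSemiring Rₛ] [Algebra R Rₛ]
    [IsLocalization S Rₛ] {M M' : Type*} [AddCommMonoid M] [AddCommMonoid M'] [Module R M]
    [Module R M'] [Module Rₛ M'] [IsScalarTower R Rₛ M'] (f : M →ₗ[R] M')
    [IsLocalizedModule S f] {s : Finset M'} (hs : span Rₛ (s : Set M') = ⊤) :
    ∃ t : Finset M, t.card ≤ s.card ∧
      ∀ x : M, ∃ c : S, (c : R) • x ∈ span R (t : Set M) := by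
  classical
  refine ⟨finsetIntegerMultiple S f s, Finset.card_image_le.trans_eq s.card_attach,
    fun x ↦ ?_⟩
  obtain ⟨c₁, hc₁⟩ := multiple_mem_span_of_mem_localization_span S Rₛ (s : Set M') (f x)
    (hs ▸ mem_top)
  rw [Submonoid.smul_def, ← map_smul] at hc₁
  obtain ⟨c₂, hc₂⟩ := smul_mem_finsetIntegerMultiple_span S f _ s hc₁
  exact ⟨c₂ * c₁, by rwa [Submonoid.coe_mul, mul_smul]⟩

theorem Submodule.eq_top_of_forall_exists_pow_smul_mem {R M ι : Type*} [CommSemiring R]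
    [AddCommMonoid M] [Module R M] {a : ι → R} (ha : Ideal.span (Set.range a) = ⊤)
    (N : Submodule R M) (H : ∀ (i : ι) (x : M), ∃ k : ℕ, a i ^ k • x ∈ N) : N = ⊤ :=
  eq_top_iff'.mpr fun x ↦
    mem_of_span_eq_top_of_smul_pow_mem N _ ha x fun ⟨_, i, rfl⟩ ↦ H i x

/-- If `a 1, …, a r` generate the unit ideal of a commutative ring `A` and the localization
of an `A`-module `M` away from each `a i` is free of rank `n` over the corresponding
localization of `A`, then `M` can be generated by `n * r` elements. -/
theorem generators_of_locally_free_module_principal_cover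
    (A : Type*) [CommRing A] (n r : ℕ) (M : Type*) [AddCommGroup M] [Module A M]
    (a : Fin r → A) (ha : Ideal.span (Set.range a) = ⊤)
    (hfree : ∀ i : Fin r,
      Nonempty ((LocalizedModule (Submonoid.powers (a i)) M) ≃ₗ[Localization.Away (a i)]
        (Fin n → Localization.Away (a i)))) :
    ∃ S : Finset M, S.card ≤ n * r ∧ Submodule.span A (S : Set M) = ⊤ := by
  classical
  have hlocal : ∀ i, ∃ t : Finset M, t.card ≤ n ∧
      ∀ x : M, ∃ c : Submonoid.powers (a i), (c : A) • x ∈ span A (t : Set M) := by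
    intro i
    obtain ⟨s, hs_card, hs_span⟩ := (hfree i).some.exists_finset_card_le_span_eq_top
    obtain ⟨t, ht_card, ht⟩ := IsLocalizedModule.exists_finset_card_le_forall_smul_mem_span
      (Submonoid.powers (a i)) (Localization.Away (a i))
      (LocalizedModule.mkLinearMap (Submonoid.powers (a i)) M) hs_span
    exact ⟨t, ht_card.trans hs_card, ht⟩
  choose t ht_card ht using hlocal
  refine ⟨Finset.univ.biUnion t, ?_, ?_⟩
  · calc (Finset.univ.biUnion t).card ≤ ∑ i, (t i).card := Finset.card_biUnion_le
      _ ≤ ∑ _i : Fin r, n := Finset.sum_le_sum fun i _ ↦ ht_card i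
      _ = n * r := by simp [mul_comm]
  · refine eq_top_of_forall_exists_pow_smul_mem ha _ fun i x ↦ ?_
    obtain ⟨⟨_, k, rfl⟩, hk⟩ := ht i x
    have hsub : t i ⊆ Finset.univ.biUnion t := Finset.subset_biUnion_of_mem t (Finset.mem_univ i)
    exact ⟨k, span_mono (Finset.coe_subset.mpr hsub) hk⟩
end

section
/- Let A be a noetherian commutative ring whose Krull dimension is at most a natural number d, and let M be a finitely generated projective A-module such that for every prime ideal 𝔭 of A the localization M_𝔭 is a free module of rank n over A_𝔭. Then there exist elements a_0, a_1, …, a_d of A generating the unit ideal such that for each i, the localization of M away from a_i is isomorphic, as a module over the localization of A away from a_i, to the free module of rank n. -/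
/-!
Call `a : A` good if some `φ : Aⁿ → M` has cokernel killed by `a`. Since `M_p ≅ A_pⁿ`, for every
prime `p` some `φ` is surjective at `p`. Combining such maps for finitely many incomparable primes
with coefficients that separate them, Nakayama's lemma and prime avoidance give a good element
outside all minimal primes of any ideal. Choosing `a₀, a₁, …` in turn outside the minimal primes of
`(a₀, …, aₖ₋₁)` lowers the dimension of `A ⧸ (a₀, …, aₖ)` at each step, so `d + 1` good elements
generate the unit ideal. If `a` is good for `φ`, then `φ` is surjective after inverting `a`, and
injective too: at each prime where `φ` is surjective it is a surjection `A_pⁿ → M_p ≅ A_pⁿ`, hence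
bijective, as surjective endomorphisms of finite modules are.
-/

open Module LinearMap PrimeSpectrum

section Localization

variable {A : Type*} [CommRing A] (S : Submonoid A)
  {N N' M M' : Type*} [AddCommGroup N] [Module A N] [AddCommGroup N'] [Module A N']
  [AddCommGroup M] [Module A M] [AddCommGroup M'] [Module A M']
  (f : N →ₗ[A] N') (g : M →ₗ[A] M') [IsLocalizedModule S f] [IsLocalizedModule S g]

theorem IsLocalizedModule.map_injective_iff_subsingleton_ker (φ : N →ₗ[A] M) :
    Function.Injective (map S f g φ) ↔ Subsingleton (LocalizedModule S (ker φ)) := by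
  have hexact := map_exact S (LocalizedModule.mkLinearMap S (ker φ)) f g _ φ
    φ.exact_subtype_ker_map
  have hinj := map_injective S (LocalizedModule.mkLinearMap S (ker φ)) f _
    (ker φ).injective_subtype
  rw [injective_iff_map_eq_zero]
  constructor
  · exact fun h ↦ ⟨fun x y ↦ hinj <| by
      rw [h _ (hexact.apply_apply_eq_zero x), h _ (hexact.apply_apply_eq_zero y)]⟩
  · intro _ y hy
    obtain ⟨x, rfl⟩ := (hexact y).mp hy
    rw [Subsingleton.elim x 0, map_zero]

theorem IsLocalizedModule.map_surjective_iff_subsingleton_coker (φ : N →ₗ[A] M) :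
    Function.Surjective (map S f g φ) ↔ Subsingleton (LocalizedModule S (M ⧸ range φ)) := by
  have hexact := map_exact S f g (LocalizedModule.mkLinearMap S (M ⧸ range φ)) φ _
    φ.exact_map_mkQ_range
  have hsurj := map_surjective S g (LocalizedModule.mkLinearMap S _) _ (range φ).mkQ_surjective
  constructor
  · refine fun h ↦ subsingleton_of_forall_eq 0 fun z ↦ ?_
    obtain ⟨y, rfl⟩ := hsurj z
    obtain ⟨x, rfl⟩ := h y
    exact hexact.apply_apply_eq_zero x
  · exact fun _ y ↦ (hexact y).mp (Subsingleton.elim _ _)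

end Localization

abbrev piLocalizationMap {A : Type*} [CommRing A] (S : Submonoid A) (n : ℕ) :
    (Fin n → A) →ₗ[A] (Fin n → Localization S) :=
  LinearMap.pi fun i ↦ Algebra.linearMap A (Localization S) ∘ₗ LinearMap.proj i

section Splitting

variable {A : Type*} [CommRing A] {M N : Type*} [AddCommGroup M] [Module A M]
  [AddCommGroup N] [Module A N]

theorem Module.annihilator_not_le_of_smul_mem_smul_top [Module.Finite A M] {p : Ideal A}
    [p.IsPrime] {u : A} (hu : u ∉ p) (h : ∀ x : M, u • x ∈ p • (⊤ : Submodule A M)) :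
    ¬ annihilator A M ≤ p := by
  intro hle
  have hp : ⟨p, ‹_›⟩ ∈ support A (M ⧸ p • (⊤ : Submodule A M)) := by
    rw [support_quotient]
    exact ⟨mem_support_iff_of_finite.mpr hle, Set.Subset.rfl⟩
  refine notMem_support_iff'.mpr (fun y ↦ ⟨u, hu, ?_⟩) hp
  obtain ⟨x, rfl⟩ := Submodule.mkQ_surjective _ y
  rw [Submodule.mkQ_apply, ← Submodule.Quotient.mk_smul, Submodule.Quotient.mk_eq_zero]
  exact h x

theorem annihilator_coker_not_le_of_range_sub_smul_le [Module.Finite A M] {p : Ideal A}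
    [p.IsPrime] {φ ψ : N →ₗ[A] M} {c : A} (hc : c ∉ p)
    (hφψ : range (φ - c • ψ) ≤ p • ⊤) (hψ : ¬ annihilator A (M ⧸ range ψ) ≤ p) :
    ¬ annihilator A (M ⧸ range φ) ≤ p := by
  obtain ⟨f, hf, hfp⟩ := Set.not_subset.mp hψ
  refine annihilator_not_le_of_smul_mem_smul_top
    (fun h ↦ (Ideal.IsPrime.mem_or_mem ‹_› h).elim hc hfp) fun y ↦ ?_
  obtain ⟨x, rfl⟩ := Submodule.mkQ_surjective _ y
  have hfx : f • x ∈ range ψ := (Submodule.Quotient.mk_eq_zero _).mp <| by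
    rw [Submodule.Quotient.mk_smul]; exact mem_annihilator.mp hf _
  obtain ⟨w, hw⟩ := hfx
  have hcfx : (c * f) • x = φ w - (φ - c • ψ) w := by simp [mul_smul, hw]
  rw [← map_smul, hcfx, map_sub, Submodule.mkQ_apply (p := range φ) (φ w),
    (Submodule.Quotient.mk_eq_zero _).mpr (mem_range_self φ w), zero_sub, neg_mem_iff]
  exact Submodule.smul_top_le_comap_smul_top p _ (hφψ (mem_range_self _ w))

theorem Ideal.exists_notMem_forall_mem_of_ne (s : Finset (Ideal A)) {p : Ideal A} [p.IsPrime]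
    (hs : ∀ q ∈ s, q ≤ p → q = p) : ∃ c ∉ p, ∀ q ∈ s, q ≠ p → c ∈ q := by
  by_contra! h
  have hinf : (s.erase p).inf id ≤ p := fun c hc ↦ by
    by_contra hcp
    obtain ⟨q, hq, hqp, hcq⟩ := h c hcp
    exact hcq (Finset.inf_le (f := id) (Finset.mem_erase.mpr ⟨hqp, hq⟩) hc)
  obtain ⟨q, hq, hqp⟩ := (Ideal.IsPrime.inf_le' ‹_›).mp hinf
  exact Finset.ne_of_mem_erase hq (hs q (Finset.mem_of_mem_erase hq) hqp)

theorem exists_forall_annihilator_coker_not_le [Module.Finite A M] (s : Finset (Ideal A))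
    (hprime : ∀ p ∈ s, p.IsPrime) (hanti : ∀ p ∈ s, ∀ q ∈ s, q ≤ p → q = p)
    (hloc : ∀ p ∈ s, ∃ ψ : N →ₗ[A] M, ¬ annihilator A (M ⧸ range ψ) ≤ p) :
    ∃ φ : N →ₗ[A] M, ∀ p ∈ s, ¬ annihilator A (M ⧸ range φ) ≤ p := by
  classical
  choose! ψ hψ using hloc
  -- `c q` lies in every prime of `s` except `q`, so `∑ q ∈ s, c q • ψ q ≡ c p • ψ p` modulo `p`.
  choose! c hc hcmem using fun p hp ↦
    have := hprime p hp; Ideal.exists_notMem_forall_mem_of_ne s (hanti p hp)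
  refine ⟨∑ q ∈ s, c q • ψ q, fun p hp ↦ ?_⟩
  have := hprime p hp
  refine annihilator_coker_not_le_of_range_sub_smul_le (hc p hp) ?_ (hψ p hp)
  rw [← Finset.add_sum_erase s _ hp, add_sub_cancel_left]
  rintro _ ⟨w, rfl⟩
  simp only [LinearMap.sum_apply, LinearMap.smul_apply]
  exact Submodule.sum_mem _ fun q hq ↦ Submodule.smul_mem_smul
    (hcmem q (Finset.mem_of_mem_erase hq) p hp (Finset.ne_of_mem_erase hq).symm) trivial

theorem exists_mem_annihilator_coker_forall_notMem_minimalPrimes [IsNoetherianRing A]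
    [Module.Finite A M]
    (hloc : ∀ p : Ideal A, p.IsPrime → ∃ ψ : N →ₗ[A] M, ¬ annihilator A (M ⧸ range ψ) ≤ p)
    (I : Ideal A) :
    ∃ a, (∃ φ : N →ₗ[A] M, a ∈ annihilator A (M ⧸ range φ)) ∧ ∀ p ∈ I.minimalPrimes, a ∉ p := by
  have hfin := I.finite_minimalPrimes_of_isNoetherianRing A
  have hprime : ∀ p ∈ hfin.toFinset, p.IsPrime := fun p hp ↦ (hfin.mem_toFinset.mp hp).1.1
  obtain ⟨φ, hφ⟩ := exists_forall_annihilator_coker_not_le hfin.toFinset hprime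
    (fun p hp q hq hqp ↦ le_antisymm hqp <|
      (hfin.mem_toFinset.mp hp).2 (hfin.mem_toFinset.mp hq).1 hqp)
    fun p hp ↦ hloc p (hprime p hp)
  have hnot : ¬ (annihilator A (M ⧸ range φ) : Set A) ⊆ ⋃ p ∈ I.minimalPrimes, p := fun h ↦ by
    obtain ⟨p, hp, hle⟩ := (Ideal.subset_union_prime_finite hfin (f := id) ⊥ ⊥
      fun p hp _ _ ↦ hp.1.1).mp h
    exact hφ p (hfin.mem_toFinset.mpr hp) hle
  obtain ⟨a, ha, hap⟩ := Set.not_subset.mp hnot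
  simp only [Set.mem_iUnion, not_exists] at hap
  exact ⟨a, ⟨φ, ha⟩, hap⟩

theorem exists_annihilator_coker_not_le_of_linearEquiv [Module.Finite A M] {n : ℕ}
    (p : Ideal A) [p.IsPrime] (e : LocalizedModule p.primeCompl M ≃ₗ[Localization.AtPrime p]
      (Fin n → Localization.AtPrime p)) :
    ∃ ψ : (Fin n → A) →ₗ[A] M, ¬ annihilator A (M ⧸ range ψ) ≤ p := by
  obtain ⟨ψ, -, -, hψ⟩ := exists_localizedMap_surjective_of_surjective p.primeCompl
    (piLocalizationMap p.primeCompl n) (LocalizedModule.mkLinearMap p.primeCompl M)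
    (ϕ := e.symm.restrictScalars A) e.symm.surjective
  refine ⟨ψ, fun hle ↦ ?_⟩
  have hcoker := (IsLocalizedModule.map_surjective_iff_subsingleton_coker _ _ _ ψ).mp hψ
  exact notMem_support_iff.mpr hcoker (mem_support_iff_of_finite (p := ⟨p, ‹_›⟩) |>.mpr hle)

theorem support_ker_subset_support_coker {n : ℕ} (φ : (Fin n → A) →ₗ[A] M)
    (hloc : ∀ 𝔭 : Ideal A, ∀ _ : 𝔭.IsPrime,
      Nonempty ((LocalizedModule 𝔭.primeCompl M) ≃ₗ[Localization.AtPrime 𝔭]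
        (Fin n → Localization.AtPrime 𝔭))) :
    support A (ker φ) ⊆ support A (M ⧸ range φ) := by
  intro p hker
  by_contra hcoker
  obtain ⟨e⟩ := hloc p.asIdeal inferInstance
  let S := p.asIdeal.primeCompl
  let φₚ := IsLocalizedModule.mapExtendScalars S (piLocalizationMap S n)
    (LocalizedModule.mkLinearMap S M) (Localization.AtPrime p.asIdeal) φ
  have hsurj : Function.Surjective φₚ :=
    (IsLocalizedModule.map_surjective_iff_subsingleton_coker _ _ _ φ).mpr
      (notMem_support_iff.mp hcoker)
  have hinj : Function.Injective φₚ := Function.Injective.of_comp (f := e) <|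
    OrzechProperty.injective_of_surjective_endomorphism (e.toLinearMap ∘ₗ φₚ)
      (e.surjective.comp hsurj)
  exact notMem_support_iff.mpr
    ((IsLocalizedModule.map_injective_iff_subsingleton_ker _ _ _ φ).mp hinj) hker

theorem nonempty_linearEquiv_pi_of_support_coker_subset {n : ℕ} (φ : (Fin n → A) →ₗ[A] M)
    (hloc : ∀ 𝔭 : Ideal A, ∀ _ : 𝔭.IsPrime,
      Nonempty ((LocalizedModule 𝔭.primeCompl M) ≃ₗ[Localization.AtPrime 𝔭]
        (Fin n → Localization.AtPrime 𝔭)))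
    {a : A} (ha : support A (M ⧸ range φ) ⊆ zeroLocus {a}) :
    Nonempty (LocalizedModule (Submonoid.powers a) M ≃ₗ[Localization.Away a]
      (Fin n → Localization.Away a)) := by
  let S := Submonoid.powers a
  let φₐ := IsLocalizedModule.mapExtendScalars S (piLocalizationMap S n)
    (LocalizedModule.mkLinearMap S M) (Localization.Away a) φ
  have hsurj : Function.Surjective φₐ :=
    (IsLocalizedModule.map_surjective_iff_subsingleton_coker _ _ _ φ).mpr
      (LocalizedModule.subsingleton_iff_support_subset.mpr ha)
  have hinj : Function.Injective φₐ :=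
    (IsLocalizedModule.map_injective_iff_subsingleton_ker _ _ _ φ).mpr
      (LocalizedModule.subsingleton_iff_support_subset.mpr
        ((support_ker_subset_support_coker φ hloc).trans ha))
  exact ⟨(LinearEquiv.ofBijective φₐ ⟨hinj, hsurj⟩).symm⟩

end Splitting

section Dimension

variable {A : Type*} [CommRing A]

theorem exists_forall_notMem_of_supportDim_lt {P : A → Prop}
    (hP : ∀ I : Ideal A, ∃ a, P a ∧ ∀ p ∈ I.minimalPrimes, a ∉ p) (d : ℕ)
    (N : Type*) [AddCommGroup N] [Module A N] [Module.Finite A N] (hN : supportDim A N < d) :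
    ∃ a : Fin d → A, (∀ i, P (a i)) ∧ ∀ p ∈ support A N, ∃ i, a i ∉ p.asIdeal := by
  induction d generalizing N with
  | zero =>
    have : Subsingleton N :=
      (supportDim_eq_bot_iff_subsingleton A N).mp (WithBot.lt_coe_bot.mp hN)
    exact ⟨Fin.elim0, fun i ↦ i.elim0, by simp [support_eq_empty]⟩
  | succ d ih =>
    obtain ⟨a₀, ha₀, hmin⟩ := hP (annihilator A N)
    obtain ⟨a, ha, hcover⟩ := ih (QuotSMulTop a₀ N) <| lt_of_add_lt_add_right <|
      (supportDim_quotSMulTop_succ_le_of_notMem_minimalPrimes hmin).trans_lt hN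
    refine ⟨Fin.cons a₀ a, Fin.cases ha₀ ha, fun p hp ↦ ?_⟩
    by_cases h : a₀ ∈ p.asIdeal
    · obtain ⟨i, hi⟩ := hcover p (by simp [support_quotSMulTop, hp, h])
      exact ⟨i.succ, by simpa using hi⟩
    · exact ⟨0, by simpa using h⟩

end Dimension

theorem splitting_number_le_dim_succ_general
    (A : Type*) [CommRing A] [IsNoetherianRing A] (d : ℕ)
    (hdim : ringKrullDim A ≤ (d : WithBot (WithTop ℕ)))
    (n : ℕ) (M : Type*) [AddCommGroup M] [Module A M]
    [Module.Finite A M]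
    (hloc : ∀ 𝔭 : Ideal A, ∀ _ : 𝔭.IsPrime,
      Nonempty ((LocalizedModule 𝔭.primeCompl M) ≃ₗ[Localization.AtPrime 𝔭]
        (Fin n → Localization.AtPrime 𝔭))) :
    ∃ a : Fin (d + 1) → A, Ideal.span (Set.range a) = ⊤ ∧
      ∀ i : Fin (d + 1),
        Nonempty ((LocalizedModule (Submonoid.powers (a i)) M) ≃ₗ[Localization.Away (a i)]
          (Fin n → Localization.Away (a i))) := by
  have hgen (p : Ideal A) (hp : p.IsPrime) :
      ∃ ψ : (Fin n → A) →ₗ[A] M, ¬ annihilator A (M ⧸ range ψ) ≤ p :=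
    (hloc p hp).elim (exists_annihilator_coker_not_le_of_linearEquiv p)
  obtain ⟨a, ha, hcover⟩ := exists_forall_notMem_of_supportDim_lt
    (exists_mem_annihilator_coker_forall_notMem_minimalPrimes hgen) (d + 1) A
    (supportDim_self_eq_ringKrullDim A ▸ hdim.trans_lt (Nat.cast_lt.mpr d.lt_succ_self))
  refine ⟨a, ?_, fun i ↦ ?_⟩
  · by_contra hne
    obtain ⟨p, hp, hle⟩ := Ideal.exists_le_maximal _ hne
    obtain ⟨i, hi⟩ := hcover ⟨p, hp.isPrime⟩ <| by
      simp [support_eq_zeroLocus, annihilator_eq_bot.mpr inferInstance]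
    exact hi (hle (Ideal.subset_span ⟨i, rfl⟩))
  · obtain ⟨φ, hφ⟩ := ha i
    exact nonempty_linearEquiv_pi_of_support_coker_subset φ hloc
      fun p hp ↦ Set.singleton_subset_iff.mpr (annihilator_le_of_mem_support hp hφ)

/-- Over a noetherian ring of Krull dimension at most `d`, a finitely generated projective
module that is locally free of rank `n` at every prime is trivialized by a cover of
`Spec A` by `d + 1` principal open sets. -/
theorem splitting_number_le_dim_succ
    (A : Type*) [CommRing A] [IsNoetherianRing A] (d : ℕ)
    (hdim : ringKrullDim A ≤ (d : WithBot (WithTop ℕ)))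
    (n : ℕ) (M : Type*) [AddCommGroup M] [Module A M]
    [Module.Finite A M] [Module.Projective A M]
    (hloc : ∀ 𝔭 : Ideal A, ∀ _ : 𝔭.IsPrime,
      Nonempty ((LocalizedModule 𝔭.primeCompl M) ≃ₗ[Localization.AtPrime 𝔭]
        (Fin n → Localization.AtPrime 𝔭))) :
    ∃ a : Fin (d + 1) → A, Ideal.span (Set.range a) = ⊤ ∧
      ∀ i : Fin (d + 1),
        Nonempty ((LocalizedModule (Submonoid.powers (a i)) M) ≃ₗ[Localization.Away (a i)]
          (Fin n → Localization.Away (a i))) :=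
  splitting_number_le_dim_succ_general A d hdim n M hloc
end

section
/- Let A be a noetherian commutative ring whose Krull dimension is at most a natural number d, and let M be a finitely generated projective A-module such that for every prime ideal 𝔭 of A the localization M_𝔭 is a free module of rank n over A_𝔭. Then M can be generated by n·(d+1) elements, i.e. there is a subset of M of cardinality at most n·(d+1) whose A-linear span is all of M. -/
/-!
Say that a family `v` in a finite `A`-module `M` spans `M` at a prime `𝔭` if the annihilator
`(span v).colon univ` of `M ⧸ span v` is not contained in `𝔭`, i.e. if the image of `v` spans
`M_𝔭`. Local freeness provides, at every prime, `n` elements spanning there.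

Given an ideal `I` with minimal primes `𝔮₁, …, 𝔮ₖ`, pick `n`-tuples `vⱼ` spanning at `𝔮ⱼ`
and elements `gⱼ` that annihilate `M ⧸ span vⱼ`, avoid `𝔮ⱼ` and lie in every other `𝔮ᵢ`.
At a prime `𝔭 ⊇ I` not containing `J = I + (g₁, …, gₖ)` exactly one `gⱼ` avoids `𝔭`, so
`∑ gᵢ vᵢ ≡ gⱼ vⱼ` modulo `𝔭 M` and, by Nakayama, the tuple `∑ gᵢ vᵢ` spans at `𝔭`; every prime
over `J` strictly contains a minimal prime of `I`, so its height is larger. Starting from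
`I = 0`, after `d + 1` steps no prime is left, and `d + 1` tuples which together span at every
maximal ideal span `M`.
-/

open Submodule Set

section

variable {A : Type*} [CommRing A] {M : Type*} [AddCommGroup M] [Module A M]

namespace Submodule

variable [Module.Finite A M] {𝔭 : Ideal A} [𝔭.IsPrime]

theorem colon_univ_le_iff_mem_support (N : Submodule A M) :
    N.colon univ ≤ 𝔭 ↔ ⟨𝔭, ‹_›⟩ ∈ Module.support A (M ⧸ N) := by
  rw [Module.mem_support_iff_of_finite, annihilator_quotient]

theorem colon_univ_not_le_of_localized_eq_top {N : Submodule A M}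
    (h : N.localized 𝔭.primeCompl = ⊤) : ¬ N.colon univ ≤ 𝔭 := by
  rw [colon_univ_le_iff_mem_support, Module.notMem_support_iff,
    ← (localizedQuotientEquiv _ N).subsingleton_congr, h]
  infer_instance

/-- Nakayama's lemma at `𝔭`, through `Supp (Q ⧸ 𝔭 Q) = Supp Q ∩ V(𝔭)` for `Q = M ⧸ N`. -/
theorem sup_smul_top_colon_univ_le_iff (N : Submodule A M) :
    (N ⊔ 𝔭 • ⊤).colon univ ≤ 𝔭 ↔ N.colon univ ≤ 𝔭 := by
  simp_rw [colon_univ_le_iff_mem_support]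
  rw [← (quotientQuotientEquivQuotientSup N (𝔭 • ⊤)).support_eq, map_smul'', map_top, range_mkQ,
    Module.support_quotient]
  simp [PrimeSpectrum.mem_zeroLocus]

end Submodule

theorem Ideal.exists_mem_notMem_forall_mem_of_isAntichain {Q : Finset (Ideal A)}
    (hQ : IsAntichain (· ≤ ·) (Q : Set (Ideal A))) {𝔮 : Ideal A} [h𝔮p : 𝔮.IsPrime] (h𝔮 : 𝔮 ∈ Q)
    {J : Ideal A} (hJ : ¬ J ≤ 𝔮) : ∃ g ∈ J, g ∉ 𝔮 ∧ ∀ 𝔮' ∈ Q, 𝔮' ≠ 𝔮 → g ∈ 𝔮' := by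
  classical
  have hinf : ¬ (Q.erase 𝔮).inf id ≤ 𝔮 := by
    rw [h𝔮p.inf_le']
    rintro ⟨𝔮', h𝔮', hle⟩
    exact hQ (Finset.mem_of_mem_erase h𝔮') h𝔮 (Finset.ne_of_mem_erase h𝔮') hle
  obtain ⟨g, hg, hg𝔮⟩ := SetLike.not_le_iff_exists.mp fun h ↦ (h𝔮p.mul_le.mp h).elim hJ hinf
  refine ⟨g, Ideal.mul_le_left hg, hg𝔮, fun 𝔮' h𝔮' hne ↦ ?_⟩
  exact Finset.inf_le (f := id) (Finset.mem_erase.mpr ⟨hne, h𝔮'⟩) (Ideal.mul_le_right hg)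

section Finite

variable [Module.Finite A M] {ι : Type*}

theorem exists_colon_span_not_le_of_span_localized {𝔭 : Ideal A} [𝔭.IsPrime]
    {x : ι → LocalizedModule 𝔭.primeCompl M}
    (hx : span (Localization.AtPrime 𝔭) (range x) = ⊤) :
    ∃ v : ι → M, ¬ (span A (range v)).colon univ ≤ 𝔭 := by
  choose frac hfrac using fun i ↦
    IsLocalizedModule.surj 𝔭.primeCompl (LocalizedModule.mkLinearMap 𝔭.primeCompl M) (x i)
  refine ⟨fun i ↦ (frac i).1, colon_univ_not_le_of_localized_eq_top ?_⟩
  rw [localized, localized'_span, eq_top_iff, ← hx, span_le]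
  rintro _ ⟨i, rfl⟩
  rw [SetLike.mem_coe, ← IsLocalization.smul_mem_iff (s := (frac i).2), hfrac]
  exact subset_span ⟨_, ⟨i, rfl⟩, rfl⟩

theorem colon_span_sum_smul_not_le {𝔭 : Ideal A} [𝔭.IsPrime] {κ : Type*} {s : Finset κ}
    {g : κ → A} {v : κ → ι → M} {k₀ : κ} (hk₀ : k₀ ∈ s) (hg₀ : g k₀ ∉ 𝔭)
    (hv₀ : ¬ (span A (range (v k₀))).colon univ ≤ 𝔭) (hg : ∀ k ∈ s, k ≠ k₀ → g k ∈ 𝔭) :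
    ¬ (span A (range fun i ↦ ∑ k ∈ s, g k • v k i)).colon univ ≤ 𝔭 := by
  classical
  set w : ι → M := fun i ↦ ∑ k ∈ s, g k • v k i
  have hw : span A (range (v k₀)) ≤ (span A (range w) ⊔ 𝔭 • ⊤).comap (g k₀ • LinearMap.id) := by
    rw [span_le]
    rintro _ ⟨i, rfl⟩
    have : g k₀ • v k₀ i = w i - ∑ k ∈ s.erase k₀, g k • v k i :=
      eq_sub_of_add_eq (s.add_sum_erase (fun k ↦ g k • v k i) hk₀)
    rw [SetLike.mem_coe, mem_comap, LinearMap.smul_apply, LinearMap.id_apply, this]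
    refine sub_mem (mem_sup_left (subset_span ⟨i, rfl⟩)) (mem_sup_right (sum_mem fun k hk ↦ ?_))
    exact smul_mem_smul (hg k (Finset.mem_of_mem_erase hk) (Finset.ne_of_mem_erase hk)) trivial
  obtain ⟨a, ha, ha𝔭⟩ := SetLike.not_le_iff_exists.mp hv₀
  rw [← sup_smul_top_colon_univ_le_iff]
  refine fun hle ↦ Ideal.IsPrime.mul_notMem ‹_› hg₀ ha𝔭 (hle (mem_colon.mpr fun m _ ↦ ?_))
  rw [mul_smul]
  exact hw (mem_colon.mp ha m trivial)

variable [IsNoetherianRing A]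
  (hloc : ∀ 𝔭 : Ideal A, 𝔭.IsPrime → ∃ v : ι → M, ¬ (span A (range v)).colon univ ≤ 𝔭)
include hloc

theorem exists_tuple_and_ideal_of_minimalPrimes (I : Ideal A) :
    ∃ (w : ι → M) (J : Ideal A), I ≤ J ∧ (∀ 𝔮 ∈ I.minimalPrimes, ¬ J ≤ 𝔮) ∧
      ∀ 𝔭 : Ideal A, 𝔭.IsPrime → I ≤ 𝔭 → ¬ J ≤ 𝔭 → ¬ (span A (range w)).colon univ ≤ 𝔭 := by
  classical
  set Q := (I.finite_minimalPrimes_of_isNoetherianRing A).toFinset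
  have hQ : IsAntichain (· ≤ ·) (Q : Set (Ideal A)) := by
    rw [Set.Finite.coe_toFinset]
    exact setOfPred_minimal_antichain _
  have hsep (𝔮 : Ideal A) (h𝔮 : 𝔮 ∈ Q) : ∃ v : ι → M, ∃ g ∉ 𝔮,
      g ∈ (span A (range v)).colon univ ∧ ∀ 𝔮' ∈ Q, 𝔮' ≠ 𝔮 → g ∈ 𝔮' := by
    have := ((Set.Finite.mem_toFinset _).mp h𝔮).1.1
    obtain ⟨v, hv⟩ := hloc 𝔮 this
    obtain ⟨g, hgv, hg𝔮, hg⟩ := Ideal.exists_mem_notMem_forall_mem_of_isAntichain hQ h𝔮 hv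
    exact ⟨v, g, hg𝔮, hgv, hg⟩
  choose! v g hg𝔮 hgv hg using hsep
  refine ⟨fun i ↦ ∑ 𝔮 ∈ Q, g 𝔮 • v 𝔮 i, I ⊔ Ideal.span (g '' Q), le_sup_left, ?_, ?_⟩
  · intro 𝔮 h𝔮 hJ
    have h𝔮Q : 𝔮 ∈ Q := (Set.Finite.mem_toFinset _).mpr h𝔮
    exact hg𝔮 𝔮 h𝔮Q (hJ (mem_sup_right (Ideal.subset_span ⟨𝔮, h𝔮Q, rfl⟩)))
  · intro 𝔭 h𝔭 hI𝔭 hJ𝔭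
    obtain ⟨𝔮₀, h𝔮₀, hg₀⟩ : ∃ 𝔮₀ ∈ Q, g 𝔮₀ ∉ 𝔭 := by
      by_contra! h
      exact hJ𝔭 (sup_le hI𝔭 (Ideal.span_le.mpr (image_subset_iff.mpr h)))
    obtain ⟨𝔮, h𝔮, h𝔮𝔭⟩ := Ideal.exists_minimalPrimes_le hI𝔭
    have h𝔮Q : 𝔮 ∈ Q := (Set.Finite.mem_toFinset _).mpr h𝔮
    obtain rfl : 𝔮 = 𝔮₀ := by
      by_contra hne
      exact hg₀ (h𝔮𝔭 (hg 𝔮₀ h𝔮₀ 𝔮 h𝔮Q hne))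
    exact colon_span_sum_smul_not_le h𝔮Q hg₀ (fun hle ↦ hg₀ (hle (hgv 𝔮 h𝔮Q)))
      fun k hk hne ↦ h𝔮𝔭 (hg k hk 𝔮 h𝔮Q hne.symm)

theorem exists_tuples_and_ideal_of_le_height (t : ℕ) :
    ∃ (w : Fin t → ι → M) (I : Ideal A), (∀ 𝔭 : Ideal A, 𝔭.IsPrime → I ≤ 𝔭 → t ≤ 𝔭.height) ∧
      ∀ 𝔭 : Ideal A, 𝔭.IsPrime → ¬ I ≤ 𝔭 → ∃ i, ¬ (span A (range (w i))).colon univ ≤ 𝔭 := by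
  induction t with
  | zero => exact ⟨Fin.elim0, ⊥, fun _ _ _ ↦ bot_le, fun _ _ h ↦ (h bot_le).elim⟩
  | succ t ih =>
    obtain ⟨w, I, hI, hw⟩ := ih
    obtain ⟨w₀, J, hIJ, hJ, hw₀⟩ := exists_tuple_and_ideal_of_minimalPrimes hloc I
    refine ⟨Fin.snoc w w₀, J, fun 𝔭 h𝔭 hJ𝔭 ↦ ?_, fun 𝔭 h𝔭 hJ𝔭 ↦ ?_⟩
    · obtain ⟨𝔮, h𝔮, h𝔮𝔭⟩ := Ideal.exists_minimalPrimes_le (hIJ.trans hJ𝔭)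
      have := h𝔮.1.1
      have hlt : 𝔮 < 𝔭 := lt_of_le_of_ne h𝔮𝔭 fun h ↦ hJ 𝔮 h𝔮 (h ▸ hJ𝔭)
      calc ((t + 1 : ℕ) : ℕ∞) ≤ 𝔮.height + 1 := by push_cast; gcongr; exact hI 𝔮 this h𝔮.1.2
        _ ≤ 𝔭.height := Ideal.height_add_one_le_of_lt_of_isPrime hlt
    · by_cases hI𝔭 : I ≤ 𝔭
      · exact ⟨Fin.last t, by simpa using hw₀ 𝔭 h𝔭 hI𝔭 hJ𝔭⟩
      · obtain ⟨i, hi⟩ := hw 𝔭 h𝔭 hI𝔭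
        exact ⟨i.castSucc, by simpa using hi⟩

theorem exists_tuples_of_ringKrullDim_le {d : ℕ} (hdim : ringKrullDim A ≤ d) :
    ∃ w : Fin (d + 1) → ι → M,
      ∀ 𝔭 : Ideal A, 𝔭.IsPrime → ∃ i, ¬ (span A (range (w i))).colon univ ≤ 𝔭 := by
  obtain ⟨w, I, hI, hw⟩ := exists_tuples_and_ideal_of_le_height hloc (d + 1)
  refine ⟨w, fun 𝔭 h𝔭 ↦ hw 𝔭 h𝔭 fun hI𝔭 ↦ ?_⟩
  have hle : (𝔭.height : WithBot ℕ∞) ≤ d := (ringKrullDim_le_iff_height_le _).mp hdim h𝔭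
  have := (hI 𝔭 h𝔭 hI𝔭).trans (WithBot.coe_le_coe.mp hle)
  norm_cast at this
  omega

end Finite

theorem span_range_uncurry_eq_top_of_forall_isMaximal {κ ι : Type*} {w : κ → ι → M}
    (h : ∀ 𝔪 : Ideal A, 𝔪.IsMaximal → ∃ k, ¬ (span A (range (w k))).colon univ ≤ 𝔪) :
    span A (range (Function.uncurry w)) = ⊤ := by
  have hcolon : (span A (range (Function.uncurry w))).colon univ = ⊤ := by
    by_contra hne
    obtain ⟨𝔪, h𝔪, hle⟩ := Ideal.exists_le_maximal _ hne
    obtain ⟨k, hk⟩ := h 𝔪 h𝔪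
    refine hk ((colon_mono (span_mono ?_) subset_rfl).trans hle)
    rintro _ ⟨i, rfl⟩
    exact ⟨(k, i), rfl⟩
  exact eq_top_iff.mpr fun m _ ↦ (colon_eq_top_iff_subset univ).mp hcolon trivial

end

theorem generators_of_locally_free_module_le_rank_mul_dim_succ_general
    (A : Type*) [CommRing A] [IsNoetherianRing A] (d : ℕ)
    (hdim : ringKrullDim A ≤ (d : WithBot (WithTop ℕ)))
    (n : ℕ) (M : Type*) [AddCommGroup M] [Module A M]
    [Module.Finite A M]
    (hloc : ∀ 𝔭 : Ideal A, ∀ _ : 𝔭.IsPrime,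
      Nonempty ((LocalizedModule 𝔭.primeCompl M) ≃ₗ[Localization.AtPrime 𝔭]
        (Fin n → Localization.AtPrime 𝔭))) :
    ∃ S : Finset M, S.card ≤ n * (d + 1) ∧ Submodule.span A (S : Set M) = ⊤ := by
  classical
  obtain ⟨w, hw⟩ := exists_tuples_of_ringKrullDim_le (fun 𝔭 h𝔭 ↦
    have ⟨e⟩ := hloc 𝔭 h𝔭
    exists_colon_span_not_le_of_span_localized ((Pi.basisFun _ (Fin n)).map e.symm).span_eq) hdim
  refine ⟨Finset.univ.image (Function.uncurry w), ?_, ?_⟩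
  · calc _ ≤ Fintype.card (Fin (d + 1) × Fin n) := Finset.card_image_le
      _ = n * (d + 1) := by simp [mul_comm]
  · rw [Finset.coe_image, Finset.coe_univ, image_univ]
    exact span_range_uncurry_eq_top_of_forall_isMaximal fun 𝔪 h𝔪 ↦ hw 𝔪 h𝔪.isPrime

/-- A finitely generated projective module that is locally free of rank `n` over a noetherian
ring of Krull dimension at most `d` can be generated by `n * (d + 1)` elements. -/
theorem generators_of_locally_free_module_le_rank_mul_dim_succ
    (A : Type*) [CommRing A] [IsNoetherianRing A] (d : ℕ)
    (hdim : ringKrullDim A ≤ (d : WithBot (WithTop ℕ)))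
    (n : ℕ) (M : Type*) [AddCommGroup M] [Module A M]
    [Module.Finite A M] [Module.Projective A M]
    (hloc : ∀ 𝔭 : Ideal A, ∀ _ : 𝔭.IsPrime,
      Nonempty ((LocalizedModule 𝔭.primeCompl M) ≃ₗ[Localization.AtPrime 𝔭]
        (Fin n → Localization.AtPrime 𝔭))) :
    ∃ S : Finset M, S.card ≤ n * (d + 1) ∧ Submodule.span A (S : Set M) = ⊤ :=
  generators_of_locally_free_module_le_rank_mul_dim_succ_general A d hdim n M hloc
end

section
/- Let K be a field of characteristic p > 0, let V be a finite-dimensional K-vector space, let u be a K-linear endomorphism of V, let r ≥ 0 be a natural number, and let g be a monic polynomial over K such that the minimal polynomial of u equals g(X^{p^r}) (the p^r-fold expansion of g). Then the minimal polynomial of the endomorphism u^{p^r} equals g. -/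
/-!
`a ^ q` is a root of `g`, because `g (a ^ q) = (expand q g) a = 0`, so `minpoly (a ^ q)` divides `g`.
Conversely `a` is a root of `expand q (minpoly (a ^ q))`, so comparing degrees after expansion gives
`deg g ≤ deg minpoly (a ^ q)`; two monic polynomials, one dividing the other, of these degrees agree.
-/

open Polynomial

namespace minpoly

variable {K A : Type*} [Field K] [Ring A] [Algebra K A]

theorem dvd_expand_minpoly_pow (a : A) (q : ℕ) : minpoly K a ∣ expand K q (minpoly K (a ^ q)) :=
  minpoly.dvd K a (by rw [expand_aeval, minpoly.aeval])

theorem pow_dvd_of_eq_expand {a : A} {q : ℕ} {g : K[X]} (h : minpoly K a = expand K q g) :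
    minpoly K (a ^ q) ∣ g :=
  minpoly.dvd K (a ^ q) (by rw [← expand_aeval, ← h, minpoly.aeval])

theorem natDegree_le_natDegree_pow_of_eq_expand {a : A} (ha : IsIntegral K a) {q : ℕ} (hq : 0 < q)
    {g : K[X]} (h : minpoly K a = expand K q g) : g.natDegree ≤ (minpoly K (a ^ q)).natDegree := by
  have hne : expand K q (minpoly K (a ^ q)) ≠ 0 :=
    (expand_ne_zero hq).mpr (minpoly.ne_zero (ha.pow q))
  have hdeg := natDegree_le_of_dvd (dvd_expand_minpoly_pow a q) hne
  rw [h, natDegree_expand, natDegree_expand] at hdeg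
  exact Nat.le_of_mul_le_mul_right hdeg hq

theorem pow_eq_of_eq_expand {a : A} (ha : IsIntegral K a) {q : ℕ} (hq : 0 < q) {g : K[X]}
    (hg : g.Monic) (h : minpoly K a = expand K q g) : minpoly K (a ^ q) = g :=
  (eq_of_monic_of_dvd_of_natDegree_le (minpoly.monic (ha.pow q)) hg (pow_dvd_of_eq_expand h)
    (natDegree_le_natDegree_pow_of_eq_expand ha hq h)).symm

end minpoly

theorem minpoly_pow_p_pow_of_expand_general
    (K : Type*) [Field K] (p : ℕ) (hp : 0 < p)
    (V : Type*) [AddCommGroup V] [Module K V] [FiniteDimensional K V]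
    (u : Module.End K V) (r : ℕ) (g : Polynomial K) (hg : g.Monic)
    (hmin : minpoly K u = Polynomial.expand K (p ^ r) g) :
    minpoly K (u ^ (p ^ r)) = g :=
  minpoly.pow_eq_of_eq_expand (Algebra.IsIntegral.isIntegral u) (pow_pos hp r) hg hmin

/-- In characteristic `p > 0`, if the minimal polynomial of an endomorphism `u` of a
finite-dimensional vector space is `g(X^(p^r))` with `g` monic, then the minimal polynomial
of `u^(p^r)` is `g`. -/
theorem minpoly_pow_p_pow_of_expand
    (K : Type*) [Field K] (p : ℕ) [CharP K p] (hp : 0 < p)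
    (V : Type*) [AddCommGroup V] [Module K V] [FiniteDimensional K V]
    (u : Module.End K V) (r : ℕ) (g : Polynomial K) (hg : g.Monic)
    (hmin : minpoly K u = Polynomial.expand K (p ^ r) g) :
    minpoly K (u ^ (p ^ r)) = g :=
  minpoly_pow_p_pow_of_expand_general K p hp V u r g hg hmin
end

section
/- Let k be a field, let K be a finite field extension of k whose degree equals ℓ^r for a prime number ℓ and a natural number r, and let L be a finite field extension of k such that the tensor product L ⊗_k K is not a field. Then ℓ divides the degree [L : k]. -/
/-!
If `[L : k]` and `[K : k]` are coprime, let `m` be a maximal ideal of `L ⊗[k] K`. The residue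
field receives both `L` and `K`, so its degree over `k` is divisible by `[L : k] [K : k]`, the
dimension of `L ⊗[k] K` itself; hence `m = ⊥` and `L ⊗[k] K` is a field. When `[K : k] = ℓ ^ r`,
coprimality fails only if `ℓ ∣ [L : k]`.
-/

open scoped TensorProduct
open Module

theorem Ideal.eq_bot_of_finrank_le_finrank_quotient {k A : Type*} [Field k] [CommRing A]
    [Algebra k A] [FiniteDimensional k A] (I : Ideal A)
    (h : finrank k A ≤ finrank k (A ⧸ I)) : I = ⊥ := by
  have hsum := (I.restrictScalars k).finrank_quotient_add_finrank
  rw [(Submodule.Quotient.restrictScalarsEquiv k I).finrank_eq] at hsum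
  have : finrank k (I.restrictScalars k) = 0 := by omega
  simpa using Submodule.finrank_eq_zero.mp this

theorem AlgHom.finrank_dvd_finrank {k K F : Type*} [Field k] [Field K] [CommRing F] [Algebra k K]
    [Algebra k F] (f : K →ₐ[k] F) : finrank k K ∣ finrank k F := by
  let := f.toAlgebra
  have : IsScalarTower k K F := .of_algebraMap_eq fun x ↦ (f.commutes x).symm
  exact finrank_dvd_finrank_right k K F

theorem Algebra.TensorProduct.isField_of_coprime_finrank (k K L : Type*) [Field k] [Field K]
    [Field L] [Algebra k K] [Algebra k L] [FiniteDimensional k K] [FiniteDimensional k L]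
    (h : (finrank k L).Coprime (finrank k K)) : IsField (L ⊗[k] K) := by
  obtain ⟨m, hm⟩ := Ideal.exists_maximal (L ⊗[k] K)
  have hL := ((Ideal.Quotient.mkₐ k m).comp includeLeft).finrank_dvd_finrank
  have hK := ((Ideal.Quotient.mkₐ k m).comp includeRight).finrank_dvd_finrank
  have hle : finrank k (L ⊗[k] K) ≤ finrank k (L ⊗[k] K ⧸ m) := by
    rw [finrank_tensorProduct]
    exact Nat.le_of_dvd finrank_pos (h.mul_dvd_of_dvd_of_dvd hL hK)
  obtain rfl := m.eq_bot_of_finrank_le_finrank_quotient hle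
  exact Ring.isField_iff_maximal_bot.mpr hm

/-- If `K/k` is a finite field extension of prime-power degree `ℓ^r` and `L/k` is a finite
field extension such that `L ⊗[k] K` is not a field, then `ℓ` divides `[L : k]`. -/
theorem prime_dvd_finrank_of_tensorProduct_not_isField
    (k : Type*) [Field k] (K : Type*) [Field K] [Algebra k K] [FiniteDimensional k K]
    (ℓ r : ℕ) (hℓ : ℓ.Prime) (hK : Module.finrank k K = ℓ ^ r)
    (L : Type*) [Field L] [Algebra k L] [FiniteDimensional k L]
    (hLK : ¬ IsField (L ⊗[k] K)) :
    ℓ ∣ Module.finrank k L := by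
  by_contra hdvd
  have hcop : (finrank k L).Coprime (finrank k K) :=
    hK ▸ ((hℓ.coprime_iff_not_dvd.mpr hdvd).symm.pow_right r)
  exact hLK (Algebra.TensorProduct.isField_of_coprime_finrank k K L hcop)
end
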